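/- There exists a positive real number α such that for every positive natural number n, ⌊αⁿ⌋ - n is an even integer. -/

import Mathlib

/-!
Take for `α` the larger root of `x² = 3x + 2`, i.e. `α = (3 + √17)/2`, with conjugate
`β = (3 - √17)/2 ∈ (-1, 0)`. The power sums `αⁿ + βⁿ` are integers satisfying
`sₙ₊₂ = 3sₙ₊₁ + 2sₙ`, hence odd for `n ≥ 1`, and `⌊αⁿ⌋ = sₙ - ⌈βⁿ⌉` where `⌈βⁿ⌉` is `1` for even
`n` and `0` for odd `n`. So `⌊αⁿ⌋` and `n` always have the same parity.
-/

def powerSumSeq (p q : ℤ) : ℕ → ℤ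
  | 0 => 2
  | 1 => p
  | n + 2 => p * powerSumSeq p q (n + 1) + q * powerSumSeq p q n

theorem powerSumSeq_eq {R : Type*} [CommRing R] {p q : ℤ} {a b : R} (hsum : a + b = p)
    (hprod : a * b = -q) (n : ℕ) : (powerSumSeq p q n : R) = a ^ n + b ^ n := by
  induction n using Nat.twoStepInduction with
  | zero => simp only [powerSumSeq, Int.cast_ofNat, pow_zero]; norm_num
  | one => simp [powerSumSeq, hsum]
  | more n ih₀ ih₁ =>
    simp only [powerSumSeq, Int.cast_add, Int.cast_mul, ih₀, ih₁, ← hsum]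
    linear_combination (a ^ n + b ^ n) * hprod

theorem odd_powerSumSeq_succ {p q : ℤ} (hp : Odd p) (hq : Even q) (n : ℕ) :
    Odd (powerSumSeq p q (n + 1)) := by
  induction n with
  | zero => exact hp
  | succ n ih => exact (hp.mul ih).add_even (hq.mul_right _)

section FloorRing

variable {R : Type*} [Ring R] [LinearOrder R] [IsStrictOrderedRing R] [FloorRing R]

theorem Int.floor_intCast_sub (z : ℤ) (x : R) : ⌊(z : R) - x⌋ = z - ⌈x⌉ := by
  rw [sub_eq_add_neg, Int.floor_intCast_add, Int.floor_neg, sub_eq_add_neg]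

theorem odd_ceil_pow_add {b : R} (hb₁ : -1 < b) (hb₀ : b < 0) {n : ℕ} (hn : n ≠ 0) :
    Odd (⌈b ^ n⌉ + n) := by
  have hpow : |b ^ n| < 1 := by
    rw [abs_pow]
    exact pow_lt_one₀ (abs_nonneg b) (abs_lt.2 ⟨hb₁, hb₀.trans one_pos⟩) hn
  rcases Nat.even_or_odd n with he | ho
  · have hceil : ⌈b ^ n⌉ = 1 := by
      rw [Int.ceil_eq_iff]
      constructor
      · simpa using he.pow_pos hb₀.ne
      · simpa using (abs_lt.1 hpow).2.le
    rw [hceil]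
    exact odd_one.add_even (by exact_mod_cast he)
  · have hceil : ⌈b ^ n⌉ = 0 := by
      rw [Int.ceil_eq_zero_iff]
      exact ⟨(abs_lt.1 hpow).1, (ho.pow_neg hb₀).le⟩
    rw [hceil, zero_add]
    exact_mod_cast ho

end FloorRing

theorem stmt4 : ∃ α : ℝ, 0 < α ∧ ∀ n : ℕ, 0 < n → Even (⌊α ^ n⌋ - (n : ℤ)) := by
  set α : ℝ := (3 + √17) / 2
  set β : ℝ := (3 - √17) / 2 with hβ
  have h17 : √17 ^ 2 = 17 := Real.sq_sqrt (by norm_num)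
  have hsqrt : 4 < √17 ∧ √17 < 5 := by
    constructor <;> nlinarith [Real.sqrt_nonneg 17]
  have hsum : α + β = (3 : ℤ) := by push_cast; ring
  have hprod : α * β = -(2 : ℤ) := by push_cast; linear_combination -h17 / 4
  refine ⟨α, by positivity, fun n hn => ?_⟩
  have hfloor : ⌊α ^ n⌋ = powerSumSeq 3 2 n - ⌈β ^ n⌉ := by
    rw [← Int.floor_intCast_sub, powerSumSeq_eq hsum hprod, add_sub_cancel_right]
  obtain ⟨m, rfl⟩ : ∃ m, n = m + 1 := ⟨n - 1, by omega⟩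
  have hs := odd_powerSumSeq_succ (p := 3) (q := 2) (by decide) (by decide) m
  have hc := odd_ceil_pow_add (b := β) (by linarith) (by linarith) hn.ne'
  rw [hfloor, sub_sub]
  exact hs.sub_odd hc
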